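/- If B is an invertible matrix such that (B C₁ Bᵀ)(B C₂ Bᵀ) = I with B C₁ Bᵀ and B C₂ Bᵀ diagonal, then the geometric mean of C₁ and C₂ equals A Aᵀ where A = B^{-1}. -/

import Mathlib

open Matrix

/-- Spectral function of a real matrix: applies `f` to the eigenvalues when the
matrix is symmetric (Hermitian); junk value (the matrix itself) otherwise. -/
noncomputable def mfun {N : ℕ} (f : ℝ → ℝ) (A : Matrix (Fin N) (Fin N) ℝ) :
    Matrix (Fin N) (Fin N) ℝ :=
  if h : A.IsHermitian then
    (h.eigenvectorUnitary : Matrix (Fin N) (Fin N) ℝ) *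
      Matrix.diagonal (fun i => f (h.eigenvalues i)) *
      (star h.eigenvectorUnitary : Matrix (Fin N) (Fin N) ℝ)
  else A

/-- The (unique SPD) square root of an SPD matrix, defined spectrally. -/
noncomputable def sqrtm {N : ℕ} (A : Matrix (Fin N) (Fin N) ℝ) := mfun Real.sqrt A

/-- The logarithm of an SPD matrix, defined spectrally. -/
noncomputable def logm {N : ℕ} (A : Matrix (Fin N) (Fin N) ℝ) := mfun Real.log A

/-- The exponential of a symmetric matrix, defined spectrally. -/
noncomputable def expm {N : ℕ} (A : Matrix (Fin N) (Fin N) ℝ) := mfun Real.exp A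

/-- Real power of an SPD matrix, defined spectrally. -/
noncomputable def powm {N : ℕ} (A : Matrix (Fin N) (Fin N) ℝ) (b : ℝ) :=
  mfun (fun x => x ^ b) A

/-- The geometric mean `C₁ # C₂ = C₁^{1/2} (C₁^{-1/2} C₂ C₁^{-1/2})^{1/2} C₁^{1/2}`. -/
noncomputable def geomMean {N : ℕ} (C₁ C₂ : Matrix (Fin N) (Fin N) ℝ) :=
  sqrtm C₁ * sqrtm ((sqrtm C₁)⁻¹ * C₂ * (sqrtm C₁)⁻¹) * sqrtm C₁

/-- Frobenius norm of a real matrix. -/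
noncomputable def frobNorm {N : ℕ} (A : Matrix (Fin N) (Fin N) ℝ) : ℝ :=
  Real.sqrt (∑ i, ∑ j, (A i j) ^ 2)

/-- The Fisher information Riemannian distance
`δ_R(C₁, C₂) = ‖ln (C₁^{-1/2} C₂ C₁^{-1/2})‖_F`. -/
noncomputable def distR {N : ℕ} (C₁ C₂ : Matrix (Fin N) (Fin N) ℝ) : ℝ :=
  frobNorm (logm ((sqrtm C₁)⁻¹ * C₂ * (sqrtm C₁)⁻¹))

/-- The geodesic `γ_β(Ω → Φ) = Ω^{1/2} (Ω^{-1/2} Φ Ω^{-1/2})^β Ω^{1/2}`. -/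
noncomputable def geodesic {N : ℕ} (Ω Φ : Matrix (Fin N) (Fin N) ℝ) (b : ℝ) :=
  sqrtm Ω * powm ((sqrtm Ω)⁻¹ * Φ * (sqrtm Ω)⁻¹) b * sqrtm Ω

/-!
`G = A Aᵀ` solves the Riccati equation `G C₁⁻¹ G = C₂`: the hypothesis says that `B C₂ Bᵀ` is the
inverse of `B C₁ Bᵀ`, i.e. `Aᵀ C₁⁻¹ A = B C₂ Bᵀ`. Any positive semidefinite solution `G` of this
equation is `C₁ # C₂`, because `X = C₁^{-1/2} G C₁^{-1/2}` is positive semidefinite with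
`X² = C₁^{-1/2} C₂ C₁^{-1/2}`, so `X` is the square root of that matrix and `C₁^{1/2} X C₁^{1/2} = G`.
-/

open scoped MatrixOrder

section

variable {N : ℕ}

lemma sqrtm_eq_cfcSqrt {A : Matrix (Fin N) (Fin N) ℝ} (hA : A.PosSemidef) :
    sqrtm A = CFC.sqrt A := by
  rw [sqrtm, mfun, dif_pos hA.1, CFC.sqrt_eq_real_sqrt A hA.nonneg, cfcₙ_eq_cfc, hA.1.cfc_eq]
  simp [IsHermitian.cfc, Unitary.conjStarAlgAut_apply, Function.comp_def]

lemma posSemidef_sqrtm {A : Matrix (Fin N) (Fin N) ℝ} (hA : A.PosSemidef) :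
    (sqrtm A).PosSemidef := by
  rw [sqrtm_eq_cfcSqrt hA]
  exact (CFC.sqrt_nonneg A).posSemidef

lemma sqrtm_mul_sqrtm {A : Matrix (Fin N) (Fin N) ℝ} (hA : A.PosSemidef) :
    sqrtm A * sqrtm A = A := by
  rw [sqrtm_eq_cfcSqrt hA]
  exact CFC.sqrt_mul_sqrt_self A hA.nonneg

lemma sqrtm_mul_self {X : Matrix (Fin N) (Fin N) ℝ} (hX : X.PosSemidef) :
    sqrtm (X * X) = X := by
  rw [sqrtm_eq_cfcSqrt (by simpa [sq] using hX.pow 2)]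
  exact CFC.sqrt_mul_self X hX.nonneg

lemma isUnit_sqrtm {A : Matrix (Fin N) (Fin N) ℝ} (hA : A.PosDef) : IsUnit (sqrtm A) := by
  rw [sqrtm_eq_cfcSqrt hA.posSemidef, CFC.isUnit_sqrt_iff A hA.posSemidef.nonneg]
  exact hA.isUnit

lemma geomMean_eq_of_mul_inv_mul_eq {C₁ C₂ G : Matrix (Fin N) (Fin N) ℝ} (h₁ : C₁.PosDef)
    (hG : G.PosSemidef) (hGC : G * C₁⁻¹ * G = C₂) : geomMean C₁ C₂ = G := by
  have hSS : sqrtm C₁ * sqrtm C₁ = C₁ := sqrtm_mul_sqrtm h₁.posSemidef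
  have hS : IsUnit (sqrtm C₁).det := (isUnit_iff_isUnit_det _).mp (isUnit_sqrtm h₁)
  have hSsymm : ((sqrtm C₁)⁻¹)ᵀ = (sqrtm C₁)⁻¹ := by
    rw [transpose_nonsing_inv, ← conjTranspose_eq_transpose_of_trivial,
      (posSemidef_sqrtm h₁.posSemidef).1.eq]
  rw [geomMean]
  generalize sqrtm C₁ = S at hSS hS hSsymm ⊢
  have hX : (S⁻¹ * G * S⁻¹).PosSemidef := by
    simpa [hSsymm] using hG.mul_mul_conjTranspose_same S⁻¹
  have hX2 : S⁻¹ * G * S⁻¹ * (S⁻¹ * G * S⁻¹) = S⁻¹ * C₂ * S⁻¹ := by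
    rw [← hGC, ← hSS, Matrix.mul_inv_rev]
    simp only [Matrix.mul_assoc]
  rw [← hX2, sqrtm_mul_self hX]
  simp only [Matrix.mul_assoc, nonsing_inv_mul _ hS, Matrix.mul_one,
    mul_nonsing_inv_cancel_left _ _ hS]

end

theorem stmt9_general {N : ℕ} (C₁ C₂ B : Matrix (Fin N) (Fin N) ℝ)
    (h₁ : C₁.PosDef) (hB : IsUnit B)
    (hI : (B * C₁ * Bᵀ) * (B * C₂ * Bᵀ) = 1) :
    geomMean C₁ C₂ = B⁻¹ * (B⁻¹)ᵀ := by
  have hBd : IsUnit B.det := (isUnit_iff_isUnit_det B).mp hB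
  have hC₂ : B * C₂ * Bᵀ = (B⁻¹)ᵀ * C₁⁻¹ * B⁻¹ := by
    rw [← inv_eq_right_inv hI, Matrix.mul_inv_rev, Matrix.mul_inv_rev, transpose_nonsing_inv,
      Matrix.mul_assoc]
  refine geomMean_eq_of_mul_inv_mul_eq h₁ ?_ ?_
  · simpa using posSemidef_self_mul_conjTranspose B⁻¹
  · calc B⁻¹ * (B⁻¹)ᵀ * C₁⁻¹ * (B⁻¹ * (B⁻¹)ᵀ)
        = B⁻¹ * ((B⁻¹)ᵀ * C₁⁻¹ * B⁻¹) * (B⁻¹)ᵀ := by simp only [Matrix.mul_assoc]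
      _ = B⁻¹ * (B * C₂ * Bᵀ) * (B⁻¹)ᵀ := by rw [hC₂]
      _ = C₂ := by
        simp only [transpose_nonsing_inv, Matrix.mul_assoc,
          mul_nonsing_inv Bᵀ (by rwa [det_transpose]), Matrix.mul_one,
          nonsing_inv_mul_cancel_left _ _ hBd]

/-- if `B` jointly diagonalizes `C₁, C₂` and `(B C₁ Bᵀ)(B C₂ Bᵀ) = I`,
then `C₁ # C₂ = A Aᵀ` where `A = B⁻¹`. -/
theorem stmt9 {N : ℕ} (C₁ C₂ B : Matrix (Fin N) (Fin N) ℝ) (d₁ d₂ : Fin N → ℝ)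
    (h₁ : C₁.PosDef) (h₂ : C₂.PosDef) (hB : IsUnit B)
    (hD₁ : B * C₁ * Bᵀ = Matrix.diagonal d₁) (hD₂ : B * C₂ * Bᵀ = Matrix.diagonal d₂)
    (hI : (B * C₁ * Bᵀ) * (B * C₂ * Bᵀ) = 1) :
    geomMean C₁ C₂ = B⁻¹ * (B⁻¹)ᵀ :=
  stmt9_general C₁ C₂ B h₁ hB hI
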